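/- For every real α ∈ (0,1) and integer K ≥ 2, the quantity T̄ = (1/(1-α))·[α·(Ψ(K,α) - 1/K) + ((K-α)/K)·∏_{j=1}^{K-1}(1-α/j)/(1+α/(K-j))], where Ψ(K,α) = ∑_{i=0}^{K-1} (1/(K-i))·∏_{j=1}^{i}(1-α/j)/(1+α/(K-j)), satisfies T̄ = (α/(1-α))·(Γ(α)·(K-1)!/Γ(K+α) - 1/K). -/

import Mathlib

/-!
Write `(x)ₙ` for the rising factorial. The `i`-th product in `Ψ` equals
`(1-α)ᵢ (α)_{K-i} (K-1)! / (i! (K-1-i)! (α)_K)`, so the `i`-th summand of `Ψ` is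
`C(K,i) (1-α)ᵢ (α)_{K-i} / (K (α)_K)`, and the boundary term `((K-α)/K) ∏_{j<K} …` is `α`
times the summand `i = K` that `Ψ` lacks. The completed sum is a Chu–Vandermonde sum,
`∑ᵢ C(K,i) (1-α)ᵢ (α)_{K-i} = (1)_K = K!`, and `Γ(K+α) = Γ(α) (α)_K`.
-/

open Finset Polynomial Nat

theorem ascPochhammer_eval_add_eq_sum {R : Type*} [CommSemiring R] (x y : R) (n : ℕ) :
    (ascPochhammer R n).eval (x + y) = ∑ ij ∈ antidiagonal n,
      n.choose ij.1 * ((ascPochhammer R ij.1).eval x * (ascPochhammer R ij.2).eval y) := by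
  induction n with
  | zero => simp
  | succ n ih =>
    rw [sum_antidiagonal_choose_succ_mul
        (fun i j => (ascPochhammer R i).eval x * (ascPochhammer R j).eval y),
      ← sum_add_distrib, ascPochhammer_succ_eval, ih, sum_mul]
    refine sum_congr rfl fun ij hij => ?_
    have hn : ij.1 + ij.2 = n := mem_antidiagonal.mp hij
    rw [choose_symm_of_eq_add hn.symm, ascPochhammer_succ_eval, ascPochhammer_succ_eval, ← hn]
    push_cast
    ring

theorem Real.Gamma_add_nat_eq_mul_ascPochhammer {x : ℝ} (hx : ∀ k : ℕ, x ≠ -k) (n : ℕ) :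
    Real.Gamma (x + n) = Real.Gamma x * (ascPochhammer ℝ n).eval x := by
  induction n with
  | zero => simp
  | succ n ih =>
    have hxn : x + n ≠ 0 := fun h => hx n (eq_neg_of_add_eq_zero_left h)
    rw [Nat.cast_succ, ← add_assoc, Real.Gamma_add_one hxn, ih, ascPochhammer_succ_eval]
    ring

theorem prod_Icc_one_sub_div_eq {𝕜 : Type*} [Field 𝕜] [CharZero 𝕜] (x : 𝕜) (i : ℕ) :
    ∏ j ∈ Icc 1 i, (1 - x / j) = (ascPochhammer 𝕜 i).eval (1 - x) / i ! := by
  induction i with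
  | zero => simp
  | succ i ih =>
    rw [prod_Icc_succ_top (by omega), ih, ascPochhammer_succ_eval, factorial_succ]
    push_cast
    field_simp
    ring

theorem prod_Icc_one_add_div_sub_eq {x : ℝ} (hx : 0 < x) {K i : ℕ} (hi : i < K) :
    ∏ j ∈ Icc 1 i, (1 + x / ((K : ℝ) - j)) =
      (ascPochhammer ℝ K).eval x * (K - 1 - i)! /
        ((ascPochhammer ℝ (K - i)).eval x * (K - 1)!) := by
  induction i with
  | zero =>
    have := (ascPochhammer_pos K x hx).ne'
    simp [this, (K - 1).factorial_ne_zero]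
  | succ i ih =>
    obtain ⟨m, rfl⟩ : ∃ m, K = m + i + 2 := ⟨K - i - 2, by omega⟩
    rw [prod_Icc_succ_top (by omega), ih (by omega),
      show m + i + 2 - i = m + 1 + 1 by omega, show m + i + 2 - (i + 1) = m + 1 by omega,
      show m + i + 2 - 1 - i = m + 1 by omega, show m + i + 2 - 1 - (i + 1) = m by omega,
      ascPochhammer_succ_eval (m + 1) x, factorial_succ]
    have hsub : ((m + i + 2 : ℕ) : ℝ) - (i + 1 : ℕ) = (m + 1 : ℕ) := by push_cast; ring
    have := (ascPochhammer_pos (m + 1) x hx).ne'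
    rw [hsub, one_add_div (by positivity), Nat.cast_mul]
    field_simp
    ring

theorem prod_Icc_ratio_eq {x : ℝ} (hx : 0 < x) {K i : ℕ} (hi : i < K) :
    ∏ j ∈ Icc 1 i, ((1 - x / j) / (1 + x / ((K : ℝ) - j))) =
      (ascPochhammer ℝ i).eval (1 - x) * (ascPochhammer ℝ (K - i)).eval x * (K - 1)! /
        (i ! * (K - 1 - i)! * (ascPochhammer ℝ K).eval x) := by
  have := (ascPochhammer_pos K x hx).ne'
  have := (ascPochhammer_pos (K - i) x hx).ne'
  rw [prod_div_distrib, prod_Icc_one_sub_div_eq, prod_Icc_one_add_div_sub_eq hx hi]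
  field_simp

theorem one_div_sub_mul_prod_Icc_ratio_eq {x : ℝ} (hx : 0 < x) {K i : ℕ} (hi : i < K) :
    1 / ((K : ℝ) - i) * ∏ j ∈ Icc 1 i, ((1 - x / j) / (1 + x / ((K : ℝ) - j))) =
      K.choose i * ((ascPochhammer ℝ i).eval (1 - x) * (ascPochhammer ℝ (K - i)).eval x) /
        (K * (ascPochhammer ℝ K).eval x) := by
  obtain ⟨m, rfl⟩ : ∃ m, K = i + m + 1 := ⟨K - i - 1, by omega⟩
  have := (ascPochhammer_pos (i + m + 1) x hx).ne'
  rw [prod_Icc_ratio_eq hx hi, Nat.cast_choose ℝ hi.le, show i + m + 1 - i = m + 1 by omega,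
    show i + m + 1 - 1 - i = m by omega, show i + m + 1 - 1 = i + m by omega,
    factorial_succ, factorial_succ]
  have hsub : ((i + m + 1 : ℕ) : ℝ) - i = m + 1 := by push_cast; ring
  have : (m : ℝ) + 1 ≠ 0 := by positivity
  rw [hsub]
  push_cast
  field_simp

theorem sum_range_choose_mul_ascPochhammer_one_sub {R : Type*} [CommRing R] (x : R) (n : ℕ) :
    ∑ i ∈ range n, n.choose i * ((ascPochhammer R i).eval (1 - x) *
      (ascPochhammer R (n - i)).eval x) = (n ! : R) - (ascPochhammer R n).eval (1 - x) := by
  have h := ascPochhammer_eval_add_eq_sum (1 - x) x n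
  rw [sub_add_cancel, ascPochhammer_eval_one, Nat.sum_antidiagonal_eq_sum_range_succ_mk,
    sum_range_succ] at h
  simp only [choose_self, Nat.sub_self, ascPochhammer_zero, eval_one] at h
  linear_combination -h

theorem sum_range_one_div_sub_mul_prod_Icc_ratio {x : ℝ} (hx : 0 < x) (K : ℕ) :
    ∑ i ∈ range K,
        1 / ((K : ℝ) - i) * ∏ j ∈ Icc 1 i, ((1 - x / j) / (1 + x / ((K : ℝ) - j))) =
      ((K ! : ℝ) - (ascPochhammer ℝ K).eval (1 - x)) / (K * (ascPochhammer ℝ K).eval x) := by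
  rw [sum_congr rfl fun i hi => one_div_sub_mul_prod_Icc_ratio_eq hx (mem_range.mp hi), ← sum_div,
    sum_range_choose_mul_ascPochhammer_one_sub]

theorem sub_div_mul_prod_Icc_ratio_sub_one {x : ℝ} (hx : 0 < x) {K : ℕ} (hK : 1 ≤ K) :
    ((K : ℝ) - x) / K * ∏ j ∈ Icc 1 (K - 1), ((1 - x / j) / (1 + x / ((K : ℝ) - j))) =
      x * (ascPochhammer ℝ K).eval (1 - x) / (K * (ascPochhammer ℝ K).eval x) := by
  obtain ⟨n, rfl⟩ : ∃ n, K = n + 1 := ⟨K - 1, by omega⟩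
  have := (ascPochhammer_pos (n + 1) x hx).ne'
  rw [prod_Icc_ratio_eq hx (by omega), ascPochhammer_succ_eval n (1 - x), Nat.add_sub_cancel,
    Nat.add_sub_cancel_left, Nat.sub_self, ascPochhammer_one, eval_X, factorial_zero]
  push_cast
  field_simp
  ring

theorem TbarK_closed_form_general (α : ℝ) (hα0 : 0 < α) (K : ℕ) (hK : 2 ≤ K)
    (Psi : ℝ)
    (hPsi : Psi = ∑ i ∈ Finset.range K, (1 / ((K : ℝ) - (i : ℝ))) *
        ∏ j ∈ Finset.Icc 1 i, ((1 - α / (j : ℝ)) / (1 + α / ((K : ℝ) - (j : ℝ)))))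
    (Tbar : ℝ)
    (hTbar : Tbar = (1 / (1 - α)) *
        (α * (Psi - 1 / (K : ℝ)) +
          (((K : ℝ) - α) / (K : ℝ)) *
            ∏ j ∈ Finset.Icc 1 (K - 1),
              ((1 - α / (j : ℝ)) / (1 + α / ((K : ℝ) - (j : ℝ)))))) :
    Tbar = (α / (1 - α)) *
        (Real.Gamma α * ((K - 1).factorial : ℝ) / Real.Gamma ((K : ℝ) + α) - 1 / (K : ℝ)) := by
  have hΓ : Real.Gamma ((K : ℝ) + α) = Real.Gamma α * (ascPochhammer ℝ K).eval α := by
    rw [add_comm]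
    exact Real.Gamma_add_nat_eq_mul_ascPochhammer
      (fun k => by linarith [k.cast_nonneg (α := ℝ)]) K
  rw [hTbar, hPsi, sum_range_one_div_sub_mul_prod_Icc_ratio hα0,
    sub_div_mul_prod_Icc_ratio_sub_one hα0 (by omega), hΓ]
  obtain ⟨n, rfl⟩ : ∃ n, K = n + 1 := ⟨K - 1, by omega⟩
  have := (ascPochhammer_pos (n + 1) α hα0).ne'
  have := (Real.Gamma_pos_of_pos hα0).ne'
  rw [Nat.add_sub_cancel, factorial_succ]
  push_cast
  field_simp
  ring

theorem TbarK_closed_form (α : ℝ) (hα0 : 0 < α) (hα1 : α < 1) (K : ℕ) (hK : 2 ≤ K)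
    (Psi : ℝ)
    (hPsi : Psi = ∑ i ∈ Finset.range K, (1 / ((K : ℝ) - (i : ℝ))) *
        ∏ j ∈ Finset.Icc 1 i, ((1 - α / (j : ℝ)) / (1 + α / ((K : ℝ) - (j : ℝ)))))
    (Tbar : ℝ)
    (hTbar : Tbar = (1 / (1 - α)) *
        (α * (Psi - 1 / (K : ℝ)) +
          (((K : ℝ) - α) / (K : ℝ)) *
            ∏ j ∈ Finset.Icc 1 (K - 1),
              ((1 - α / (j : ℝ)) / (1 + α / ((K : ℝ) - (j : ℝ)))))) :
    Tbar = (α / (1 - α)) *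
        (Real.Gamma α * ((K - 1).factorial : ℝ) / Real.Gamma ((K : ℝ) + α) - 1 / (K : ℝ)) :=
  TbarK_closed_form_general α hα0 K hK Psi hPsi Tbar hTbar
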